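/- If σ = τ₁ ≺ μ₊(τ₁) ≻ τ₂ ≺ μ₊(τ₂) ≻ … ≻ τ_q ≺ μ₊(τ_q) ≻ τ is a Λ-path in Ω_n (with q ≥ 1 and τ critical), then B(τ₁) = B(τ₂) = … = B(τ_q) = B(τ) = ∅. -/
import Mathlib


/-- A (potential) cube of the cubical complex `Ω_n`: an ordered 4-tuple of finite
subsets of `ℕ`. -/
structure Cube where
  A : Finset ℕ
  B : Finset ℕ
  C : Finset ℕ
  D : Finset ℕ
deriving DecidableEq

/-- `σ` is a cube of `Ω_n`: the four parts are pairwise disjoint, their union is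
`[n] = {1,…,n}`, and `A`, `C` are nonempty. -/
def IsCube (n : ℕ) (σ : Cube) : Prop :=
  Disjoint σ.A σ.B ∧ Disjoint σ.A σ.C ∧ Disjoint σ.A σ.D ∧
  Disjoint σ.B σ.C ∧ Disjoint σ.B σ.D ∧ Disjoint σ.C σ.D ∧
  σ.A ∪ σ.B ∪ σ.C ∪ σ.D = Finset.Icc 1 n ∧
  σ.A.Nonempty ∧ σ.C.Nonempty

/-- The dimension of a cube, `|B| + |D|`. -/
def Cube.dim (σ : Cube) : ℕ := σ.B.card + σ.D.card

/-- The pivot `α(σ) = min (A ∪ B)`. -/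
noncomputable def Cube.alpha (σ : Cube) : ℕ := sInf (↑(σ.A ∪ σ.B) : Set ℕ)

/-- The pivot `β(σ) = max (B ∪ C)`. -/
noncomputable def Cube.beta (σ : Cube) : ℕ := sSup (↑(σ.B ∪ σ.C) : Set ℕ)

def M1up (σ : Cube) : Prop := σ.alpha ∈ σ.B
def M1down (σ : Cube) : Prop := σ.alpha ∈ σ.A ∧ 2 ≤ σ.A.card
def M2up (σ : Cube) : Prop := σ.A = {σ.alpha} ∧ σ.beta ∈ σ.B
def M2down (σ : Cube) : Prop :=
  σ.A = {σ.alpha} ∧ σ.beta ∈ σ.C ∧ 2 ≤ σ.C.card ∧ σ.alpha < σ.beta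
def Mdown (σ : Cube) : Prop := M1down σ ∨ M2down σ
def Mup (σ : Cube) : Prop := M1up σ ∨ M2up σ
def Critical (σ : Cube) : Prop := ¬ Mdown σ ∧ ¬ Mup σ

/-- The covering relation: `τ` is obtained from `σ` by moving exactly one element
of `B(σ) ∪ D(σ)` into `A(σ)` or into `C(σ)`. -/
def Covers (σ τ : Cube) : Prop :=
  (∃ x ∈ σ.B, τ = ⟨insert x σ.A, σ.B.erase x, σ.C, σ.D⟩) ∨
  (∃ x ∈ σ.B, τ = ⟨σ.A, σ.B.erase x, insert x σ.C, σ.D⟩) ∨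
  (∃ x ∈ σ.D, τ = ⟨insert x σ.A, σ.B, σ.C, σ.D.erase x⟩) ∨
  (∃ x ∈ σ.D, τ = ⟨σ.A, σ.B, insert x σ.C, σ.D.erase x⟩)

open Classical in
/-- The matching `μ₊ : M↓ → M↑`. -/
noncomputable def muPlus (σ : Cube) : Cube :=
  if M1down σ then ⟨σ.A.erase σ.alpha, insert σ.alpha σ.B, σ.C, σ.D⟩
  else ⟨σ.A, insert σ.beta σ.B, σ.C.erase σ.beta, σ.D⟩
open Finset in
lemma fin_sInf_le {s : Finset ℕ} {a : ℕ} (ha : a ∈ s) : sInf (↑s : Set ℕ) ≤ a :=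
  Nat.sInf_le (Finset.mem_coe.2 ha)

open Finset in
lemma fin_le_sSup {s : Finset ℕ} {a : ℕ} (ha : a ∈ s) : a ≤ sSup (↑s : Set ℕ) :=
  le_csSup s.finite_toSet.bddAbove (Finset.mem_coe.2 ha)

lemma fin_sInf_mem {s : Finset ℕ} (hs : s.Nonempty) : sInf (↑s : Set ℕ) ∈ s := by
  have := Nat.sInf_mem (s := (↑s : Set ℕ)) (by exact ⟨hs.choose, Finset.mem_coe.2 hs.choose_spec⟩)
  exact Finset.mem_coe.1 this

lemma fin_sSup_mem {s : Finset ℕ} (hs : s.Nonempty) : sSup (↑s : Set ℕ) ∈ s := by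
  have := Nat.sSup_mem (s := (↑s : Set ℕ))
    ⟨hs.choose, Finset.mem_coe.2 hs.choose_spec⟩ s.finite_toSet.bddAbove
  exact Finset.mem_coe.1 this

/-- A critical cube with nonempty `B` has `|A| = 1` and `|C| = 1`. -/
lemma crit_cards {n : ℕ} {τ : Cube} (hσ : IsCube n τ) (hcrit : Critical τ)
    (hB : τ.B.Nonempty) : τ.A.card = 1 ∧ τ.C.card = 1 := by
  obtain ⟨hAB, hAC, hAD, hBC, hBD, hCD, hun, hA, hC⟩ := hσ
  obtain ⟨b, hb⟩ := hB
  have hαmem : τ.alpha ∈ τ.A ∪ τ.B :=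
    fin_sInf_mem ⟨hA.choose, Finset.mem_union_left _ hA.choose_spec⟩
  have hαA : τ.alpha ∈ τ.A := by
    rcases Finset.mem_union.1 hαmem with h | h
    · exact h
    · exact absurd (Or.inl h) hcrit.2
  have hA1 : τ.A.card = 1 := by
    have h2 : ¬ (2 ≤ τ.A.card) := fun h2 => hcrit.1 (Or.inl ⟨hαA, h2⟩)
    have := Finset.card_pos.2 hA
    omega
  have hAeq : τ.A = {τ.alpha} := by
    obtain ⟨a, ha⟩ := Finset.card_eq_one.1 hA1
    rw [ha] at hαA ⊢
    rw [Finset.mem_singleton.1 hαA]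
  have hβmem : τ.beta ∈ τ.B ∪ τ.C :=
    fin_sSup_mem ⟨b, Finset.mem_union_left _ hb⟩
  have hβC : τ.beta ∈ τ.C := by
    rcases Finset.mem_union.1 hβmem with h | h
    · exact absurd (Or.inr ⟨hAeq, h⟩) hcrit.2
    · exact h
  have hαb : τ.alpha < b := by
    have h1 : τ.alpha ≤ b := fin_sInf_le (Finset.mem_union_right _ hb)
    have h2 : τ.alpha ≠ b := fun h => Finset.disjoint_left.1 hAB (h ▸ hαA) hb
    omega
  have hbβ : b < τ.beta := by
    have h1 : b ≤ τ.beta := fin_le_sSup (Finset.mem_union_left _ hb)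
    have h2 : b ≠ τ.beta := fun h => Finset.disjoint_left.1 hBC hb (h ▸ hβC)
    omega
  have hC1 : τ.C.card = 1 := by
    have h2 : ¬ (2 ≤ τ.C.card) := fun h2 => hcrit.1 (Or.inr ⟨hAeq, hβC, h2, by omega⟩)
    have := Finset.card_pos.2 hC
    omega
  exact ⟨hA1, hC1⟩

/-- If `σ ∈ M↓` and `μ₊(σ) ≻ τ` with `τ` critical, then `B(τ) = ∅`. -/
lemma last_step {n : ℕ} {σ τ : Cube} (hσ : IsCube n σ) (hτ : IsCube n τ) (hd : Mdown σ)
    (hcov : Covers (muPlus σ) τ) (hcrit : Critical τ) : τ.B = ∅ := by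
  rw [← Finset.not_nonempty_iff_eq_empty]
  intro hBne
  obtain ⟨hA1, hC1⟩ := crit_cards hτ hcrit hBne
  obtain ⟨hAB, hAC, hAD, hBC, hBD, hCD, hun, hA, hC⟩ := hσ
  have hAcard := Finset.card_pos.2 hA
  have hCcard := Finset.card_pos.2 hC
  by_cases hd1 : M1down σ
  · obtain ⟨hαA, hcard⟩ := hd1
    rw [muPlus, if_pos ⟨hαA, hcard⟩] at hcov
    rcases hcov with ⟨x, hx, rfl⟩ | ⟨x, hx, rfl⟩ | ⟨x, hx, rfl⟩ | ⟨x, hx, rfl⟩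
    · simp only at hA1
      by_cases hxα : x = σ.alpha
      · rw [hxα, Finset.insert_erase hαA] at hA1; omega
      · have hxB : x ∈ σ.B := (Finset.mem_insert.1 hx).resolve_left hxα
        have hxA : x ∉ σ.A.erase σ.alpha :=
          fun h => Finset.disjoint_right.1 hAB hxB (Finset.mem_of_mem_erase h)
        rw [Finset.card_insert_of_notMem hxA, Finset.card_erase_of_mem hαA] at hA1
        omega
    · simp only at hC1
      have hxC : x ∉ σ.C := by
        rcases Finset.mem_insert.1 hx with rfl | h
        · exact Finset.disjoint_left.1 hAC hαA
        · exact Finset.disjoint_left.1 hBC h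
      rw [Finset.card_insert_of_notMem hxC] at hC1
      omega
    · simp only at hA1
      have hxA : x ∉ σ.A.erase σ.alpha :=
        fun h => Finset.disjoint_right.1 hAD hx (Finset.mem_of_mem_erase h)
      rw [Finset.card_insert_of_notMem hxA, Finset.card_erase_of_mem hαA] at hA1
      omega
    · simp only at hC1
      have hxC : x ∉ σ.C := Finset.disjoint_right.1 hCD hx
      rw [Finset.card_insert_of_notMem hxC] at hC1
      omega
  · obtain ⟨hAeq, hβC, hCc2, hαβ⟩ := hd.resolve_left hd1
    rw [muPlus, if_neg hd1] at hcov
    rcases hcov with ⟨x, hx, rfl⟩ | ⟨x, hx, rfl⟩ | ⟨x, hx, rfl⟩ | ⟨x, hx, rfl⟩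
    · simp only at hA1
      have hxA : x ∉ σ.A := by
        rcases Finset.mem_insert.1 hx with rfl | h
        · exact Finset.disjoint_right.1 hAC hβC
        · exact Finset.disjoint_right.1 hAB h
      rw [Finset.card_insert_of_notMem hxA] at hA1
      omega
    · simp only at hC1
      by_cases hxβ : x = σ.beta
      · rw [hxβ, Finset.insert_erase hβC] at hC1; omega
      · have hxB : x ∈ σ.B := (Finset.mem_insert.1 hx).resolve_left hxβ
        have hxC : x ∉ σ.C.erase σ.beta :=
          fun h => Finset.disjoint_left.1 hBC hxB (Finset.mem_of_mem_erase h)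
        rw [Finset.card_insert_of_notMem hxC, Finset.card_erase_of_mem hβC] at hC1
        omega
    · simp only at hA1
      have hxA : x ∉ σ.A := Finset.disjoint_right.1 hAD hx
      rw [Finset.card_insert_of_notMem hxA] at hA1
      omega
    · simp only at hC1
      have hxC : x ∉ σ.C.erase σ.beta :=
        fun h => Finset.disjoint_left.1 hCD (Finset.mem_of_mem_erase h) hx
      rw [Finset.card_insert_of_notMem hxC, Finset.card_erase_of_mem hβC] at hC1
      omega

/-- Along a matching step, `|B|` does not decrease. -/
lemma card_step {n : ℕ} {σ τ : Cube} (hσ : IsCube n σ) (hd : Mdown σ)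
    (hcov : Covers (muPlus σ) τ) : σ.B.card ≤ τ.B.card := by
  obtain ⟨hAB, hAC, hAD, hBC, hBD, hCD, -, -, -⟩ := hσ
  have key : ∃ p, p ∉ σ.B ∧ (muPlus σ).B = insert p σ.B := by
    by_cases hd1 : M1down σ
    · exact ⟨σ.alpha, Finset.disjoint_left.1 hAB hd1.1, by rw [muPlus, if_pos hd1]⟩
    · have hd2 := hd.resolve_left hd1
      exact ⟨σ.beta, Finset.disjoint_right.1 hBC hd2.2.1, by rw [muPlus, if_neg hd1]⟩
  obtain ⟨p, hp, hB⟩ := key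
  have hcards : (insert p σ.B).card = σ.B.card + 1 := Finset.card_insert_of_notMem hp
  rcases hcov with ⟨x, hx, rfl⟩ | ⟨x, hx, rfl⟩ | ⟨x, hx, rfl⟩ | ⟨x, hx, rfl⟩
  · show σ.B.card ≤ ((muPlus σ).B.erase x).card
    have := Finset.pred_card_le_card_erase (s := (muPlus σ).B) (a := x)
    rw [hB] at this ⊢
    omega
  · show σ.B.card ≤ ((muPlus σ).B.erase x).card
    have := Finset.pred_card_le_card_erase (s := (muPlus σ).B) (a := x)
    rw [hB] at this ⊢
    omega
  · show σ.B.card ≤ ((muPlus σ).B).card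
    rw [hB]; omega
  · show σ.B.card ≤ ((muPlus σ).B).card
    rw [hB]; omega

/-- If `σ = τ₁ ≺ μ₊(τ₁) ≻ τ₂ ≺ … ≻ τ_q ≺ μ₊(τ_q) ≻ τ` is a Λ-path in `Ω_n`
(with `q ≥ 1` and `τ` critical), then `B(τ₁) = … = B(τ_q) = B(τ) = ∅`.
Here `τs i` is `τ_{i+1}` for `0 ≤ i < q`. -/
theorem lambda_path_B_empty (n q : ℕ) (hn : 2 ≤ n) (hq : 1 ≤ q)
    (τs : ℕ → Cube) (τ : Cube)
    (hcubes : ∀ i < q, IsCube n (τs i)) (hτcube : IsCube n τ)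
    (hdown : ∀ i < q, Mdown (τs i))
    (hsteps : ∀ i, i + 1 < q → Covers (muPlus (τs i)) (τs (i + 1)))
    (hlast : Covers (muPlus (τs (q - 1))) τ)
    (hcrit : Critical τ) :
    (∀ i < q, (τs i).B = ∅) ∧ τ.B = ∅ := by
  have hqd : q - 1 < q := by omega
  have hτB : τ.B = ∅ := last_step (hcubes _ hqd) hτcube (hdown _ hqd) hlast hcrit
  have hq1 : (τs (q - 1)).B = ∅ := by
    have := card_step (hcubes _ hqd) (hdown _ hqd) hlast
    rw [hτB] at this
    simp only [Finset.card_empty] at this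
    exact Finset.card_eq_zero.1 (by omega)
  have back : ∀ i, i + 1 < q → (τs (i + 1)).B = ∅ → (τs i).B = ∅ := by
    intro i hi h
    have := card_step (hcubes i (by omega)) (hdown i (by omega)) (hsteps i hi)
    rw [h] at this
    simp only [Finset.card_empty] at this
    exact Finset.card_eq_zero.1 (by omega)
  have key : ∀ k, (τs (q - 1 - k)).B = ∅ := by
    intro k
    induction k with
    | zero => simpa using hq1
    | succ k ih =>
      by_cases hk : k + 1 ≤ q - 1
      · have heq : q - 1 - (k + 1) + 1 = q - 1 - k := by omega
        exact back _ (by omega) (heq ▸ ih)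
      · have : q - 1 - (k + 1) = q - 1 - k := by omega
        rw [this]; exact ih
  refine ⟨fun i hi => ?_, hτB⟩
  have : i = q - 1 - (q - 1 - i) := by omega
  rw [this]
  exact key _
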